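/- arXiv:math/0209188 — 8 statements merged into one kernel-verified Lean document; each statement's English description precedes it below -/
import Mathlib

section
/- Let Q = Q_k be the linear quiver of type A_n with all arrows i ← i+1, and let D : ℤR^+ → ℤ^N be the linear function associated to the directed partition of the positive roots determined by another quiver Q' of type A_n via slices. Then D is invertible, and each component c_α of E(a) = D^{-1}(a) is of the form a_k − a_l or a_k for suitable indices k, l. -/
/-!
By injectivity of `J p`, the letter `J p (σ p u)` lies in the support `{J p w : w ≤ v}` of the
`v`-th root of its part exactly when `σ p u ≤ v`. So on each part `D` is the suffix-sum operator
`c ↦ (x ↦ ∑_{y ≥ x} c y)` followed by the reindexing `σ p`. The suffix sum is inverted by the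
difference operator `a ↦ (x ↦ a x - a (x + 1))` (just `a x` at the last index), whose
components have the required shape.
-/

open Finset Order

section SuffixSum

variable {α M : Type*} [LinearOrder α]

section Sum

variable [LocallyFiniteOrderTop α] [AddCommMonoid M]

def suffixSum (c : α → M) (x : α) : M := ∑ y ∈ Ici x, c y

lemma suffixSum_of_isMax (c : α → M) {x : α} (hx : IsMax x) : suffixSum c x = c x := by
  rw [suffixSum, ← add_sum_Ioi_eq_sum_Ici, hx.finsetIoi_eq, sum_empty, add_zero]

lemma suffixSum_eq_add_suffixSum_succ [SuccOrder α] (c : α → M) {x : α} (hx : ¬IsMax x) :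
    suffixSum c x = c x + suffixSum c (succ x) := by
  rw [suffixSum, suffixSum, ← add_sum_Ioi_eq_sum_Ici, Ici_succ_eq_Ioi_of_not_isMax hx]

end Sum

section Diff

variable [SuccOrder α] [AddCommGroup M]

open Classical in
noncomputable def suffixDiff (a : α → M) (x : α) : M := if IsMax x then a x else a x - a (succ x)

lemma suffixDiff_of_isMax (a : α → M) {x : α} (hx : IsMax x) : suffixDiff a x = a x :=
  if_pos hx

lemma suffixDiff_of_not_isMax (a : α → M) {x : α} (hx : ¬IsMax x) :
    suffixDiff a x = a x - a (succ x) :=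
  if_neg hx

variable [LocallyFiniteOrderTop α]

lemma suffixDiff_suffixSum (c : α → M) : suffixDiff (suffixSum c) = c := by
  funext x
  by_cases hx : IsMax x
  · rw [suffixDiff_of_isMax _ hx, suffixSum_of_isMax c hx]
  · rw [suffixDiff_of_not_isMax _ hx, suffixSum_eq_add_suffixSum_succ c hx, add_sub_cancel_right]

lemma suffixSum_suffixDiff [WellFoundedGT α] (a : α → M) : suffixSum (suffixDiff a) = a := by
  funext x
  induction x using WellFoundedGT.induction with
  | ind x ih =>
    by_cases hx : IsMax x
    · rw [suffixSum_of_isMax _ hx, suffixDiff_of_isMax _ hx]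
    · rw [suffixSum_eq_add_suffixSum_succ _ hx, ih _ (lt_succ_of_not_isMax hx),
        suffixDiff_of_not_isMax _ hx, sub_add_cancel]

end Diff

end SuffixSum

lemma filter_exists_le_apply_eq_eq_Ici {α β : Type*} [LinearOrder α] [Fintype α]
    [LocallyFiniteOrderTop α] {J : α → β} (hJ : Function.Injective J) (x : α)
    [DecidablePred fun y => ∃ w, w ≤ y ∧ J w = J x] :
    univ.filter (fun y => ∃ w, w ≤ y ∧ J w = J x) = Ici x := by
  ext y
  simp only [mem_filter, mem_univ, true_and, mem_Ici]
  exact ⟨fun ⟨w, hwy, hw⟩ => hJ hw ▸ hwy, fun hxy => ⟨x, hxy, rfl⟩⟩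

theorem D_invertible_general
    (s : ℕ) (t : Fin s → ℕ)
    (J : ∀ p, Fin (t p) → ℕ) (hJ : ∀ p, Function.Injective (J p))
    (σ : ∀ p, Equiv.Perm (Fin (t p)))
    (D : (∀ p, Fin (t p) → ℤ) → (∀ p, Fin (t p) → ℤ))
    (hD : ∀ c p u, D c p u =
      ∑ v ∈ Finset.univ.filter (fun v => ∃ w, w ≤ v ∧ J p w = J p (σ p u)), c p v) :
    Function.Bijective D ∧
      ∃ E : (∀ p, Fin (t p) → ℤ) → (∀ p, Fin (t p) → ℤ),
        Function.LeftInverse E D ∧ Function.RightInverse E D ∧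
        ∀ p u, (∃ k l, ∀ a, E a p u = a p k - a p l) ∨ (∃ k, ∀ a, E a p u = a p k) := by
  have hD_eq : ∀ c p, D c p = suffixSum (c p) ∘ σ p := fun c p => funext fun u => by
    rw [hD, filter_exists_le_apply_eq_eq_Ici (hJ p)]
    rfl
  let E : (∀ p, Fin (t p) → ℤ) → (∀ p, Fin (t p) → ℤ) :=
    fun a p => suffixDiff (a p ∘ (σ p).symm)
  have hleft : Function.LeftInverse E D := fun c => funext fun p => by
    simp only [E, hD_eq, Function.comp_assoc, Equiv.self_comp_symm, Function.comp_id,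
      suffixDiff_suffixSum]
  have hright : Function.RightInverse E D := fun a => funext fun p => by
    simp only [E, hD_eq, suffixSum_suffixDiff, Function.comp_assoc, Equiv.symm_comp_self,
      Function.comp_id]
  refine ⟨⟨hleft.injective, hright.surjective⟩, E, hleft, hright, fun p u => ?_⟩
  by_cases hu : IsMax u
  · exact .inr ⟨(σ p).symm u, fun a => suffixDiff_of_isMax _ hu⟩
  · exact .inl ⟨(σ p).symm u, (σ p).symm (succ u), fun a => suffixDiff_of_not_isMax _ hu⟩

/-- (Lemma 4.5) Invertibility of the linear map `D` associated to the directed slice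
partition of the positive roots of type `A_n` determined by a quiver `Q'`.

Each part `I_p` (of size `t p`) consists of nested roots `α^p_u = α_{J 1} + ... + α_{J u}`,
encoded by the injective function `J p : Fin (t p) → ℕ` listing the simple roots added one
at a time; `σ p` is the permutation sorting the support, so that `i^p_u = J p (σ p u)` is
the `u`-th smallest letter of the support.  The map `D` sends `c = (c_α)` to `a = (a_j)`
with `a^p_u = Σ_{α ∈ I_p, i^p_u ∈ α} c_α` (membership of the letter `i^p_u` in the support
`{J p w : w ≤ v}` of `α^p_v`).  Then `D` is invertible and each component of the inverse
`E = D⁻¹` is of the form `a_k - a_l` or `a_k`. -/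
theorem D_invertible
    (s : ℕ) (t : Fin s → ℕ) (ht : ∀ p, 1 ≤ t p)
    (J : ∀ p, Fin (t p) → ℕ) (hJ : ∀ p, Function.Injective (J p))
    (σ : ∀ p, Equiv.Perm (Fin (t p)))
    (hσ : ∀ p, StrictMono (fun u => J p (σ p u)))
    (D : (∀ p, Fin (t p) → ℤ) → (∀ p, Fin (t p) → ℤ))
    (hD : ∀ c p u, D c p u =
      ∑ v ∈ Finset.univ.filter (fun v => ∃ w, w ≤ v ∧ J p w = J p (σ p u)), c p v) :
    Function.Bijective D ∧
      ∃ E : (∀ p, Fin (t p) → ℤ) → (∀ p, Fin (t p) → ℤ),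
        Function.LeftInverse E D ∧ Function.RightInverse E D ∧
        ∀ p u, (∃ k l, ∀ a, E a p u = a p k - a p l) ∨ (∃ k, ∀ a, E a p u = a p k) :=
  D_invertible_general s t J hJ σ D hD
end

section
/- With I_p = {α^p_1, ..., α^p_{t_p}} a part of a directed partition where α^p_u = α_{j_1} + ... + α_{j_u}, and σ the permutation of {1,...,t_p} with j_{σ(u)} = i^p_u (the letters i^p_1 < ... < i^p_{t_p} being the support of I_p in increasing order), the components of D restricted to this part satisfy a^p_u = c_{α^p_{σ(u)}} + c_{α^p_{σ(u)+1}} + ... + c_{α^p_{t_p}}, and hence c_{α^p_u} = a^p_{σ^{-1}(u)} − a^p_{σ^{-1}(u+1)} for u ≠ t_p and c_{α^p_{t_p}} = a^p_{σ^{-1}(t_p)}. -/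
attribute [local instance] Classical.propDecidable

/-! Since the letters `J w` are distinct, the letter `J (σ u)` lies in the support of `α^p_v`
exactly when `σ u ≤ v`, so `a^p_u` is the tail sum of the `c_{α^p_v}` from `v = σ u` on.
Consecutive tail sums differ by a single term, and the last one is a single term. -/

theorem Function.Injective.exists_le_and_eq_iff {ι β : Type*} [Preorder ι] {J : ι → β}
    (hJ : Function.Injective J) (x v : ι) : (∃ w, w ≤ v ∧ J w = J x) ↔ x ≤ v :=
  ⟨fun ⟨_, hw, hJw⟩ => hJ hJw ▸ hw, fun h => ⟨x, h, rfl⟩⟩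

theorem Fin.Ioi_eq_Ici_of_add_one_lt {t : ℕ} (u : Fin t) (h : (u : ℕ) + 1 < t) :
    Finset.Ioi u = Finset.Ici ⟨u + 1, h⟩ := by
  ext v
  simp only [Finset.mem_Ioi, Finset.mem_Ici, Fin.lt_def, Fin.le_def]
  omega

theorem Fin.isMax_of_add_one_eq {t : ℕ} {u : Fin t} (h : (u : ℕ) + 1 = t) : IsMax u :=
  fun v _ => Fin.le_def.2 (by omega)

theorem D_components_on_part_general
    (t : ℕ) (J : Fin t → ℕ) (hJ : Function.Injective J)
    (σ : Equiv.Perm (Fin t))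
    (c a : Fin t → ℤ)
    (ha : ∀ u, a u =
      ∑ v ∈ Finset.univ.filter (fun v => ∃ w, w ≤ v ∧ J w = J (σ u)), c v) :
    (∀ u, a u = ∑ v ∈ Finset.univ.filter (fun v => σ u ≤ v), c v) ∧
    (∀ (u : Fin t) (h : (u : ℕ) + 1 < t),
      c u = a (σ⁻¹ u) - a (σ⁻¹ ⟨(u : ℕ) + 1, h⟩)) ∧
    (∀ u : Fin t, (u : ℕ) + 1 = t → c u = a (σ⁻¹ u)) := by
  have ha_tail : ∀ u, a u = ∑ v ∈ Finset.univ.filter (fun v => σ u ≤ v), c v := fun u => by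
    simpa only [hJ.exists_le_and_eq_iff] using ha u
  have ha_Ici : ∀ u, a (σ⁻¹ u) = ∑ v ∈ Finset.Ici u, c v := fun u => by
    rw [ha_tail, Equiv.Perm.coe_inv, Equiv.apply_symm_apply, Finset.filter_le_eq_Ici]
  refine ⟨ha_tail, fun u h => ?_, fun u h => ?_⟩
  · rw [ha_Ici, ha_Ici, ← Fin.Ioi_eq_Ici_of_add_one_lt u h, ← Finset.add_sum_Ioi_eq_sum_Ici,
      add_sub_cancel_right]
  · rw [ha_Ici, ← Finset.add_sum_Ioi_eq_sum_Ici, (Fin.isMax_of_add_one_eq h).finsetIoi_eq,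
      Finset.sum_empty, add_zero]

/-- Within one part `I_p = {α^p_1, ..., α^p_t}` of a directed partition, where
`α^p_u = α_{J 1} + ... + α_{J u}` (so `J` lists the simple roots added one at a time) and
`σ` is the permutation with `i^p_u = J (σ u)` (the letters of the support in increasing
order), the components of the function `D` satisfy
`a^p_u = c_{α^p_{σ u}} + c_{α^p_{σ u + 1}} + ... + c_{α^p_t}`, and hence
`c_{α^p_u} = a^p_{σ⁻¹ u} - a^p_{σ⁻¹ (u+1)}` for `u ≠ t` and `c_{α^p_t} = a^p_{σ⁻¹ t}`. -/
theorem D_components_on_part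
    (t : ℕ) (ht : 1 ≤ t) (J : Fin t → ℕ) (hJ : Function.Injective J)
    (σ : Equiv.Perm (Fin t)) (hσ : StrictMono (fun u => J (σ u)))
    (c a : Fin t → ℤ)
    (ha : ∀ u, a u =
      ∑ v ∈ Finset.univ.filter (fun v => ∃ w, w ≤ v ∧ J w = J (σ u)), c v) :
    (∀ u, a u = ∑ v ∈ Finset.univ.filter (fun v => σ u ≤ v), c v) ∧
    (∀ (u : Fin t) (h : (u : ℕ) + 1 < t),
      c u = a (σ⁻¹ u) - a (σ⁻¹ ⟨(u : ℕ) + 1, h⟩)) ∧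
    (∀ u : Fin t, (u : ℕ) + 1 = t → c u = a (σ⁻¹ u)) :=
  D_components_on_part_general t J hJ σ c a ha
end

section
/- Let Q be a quiver of type A_n and let c = (c_{ij})_{1 ≤ i ≤ j ≤ n} be a point of the cone L_PBW(Q). Then for every left component X of Q, with T_z(X) = {x_1,...,x_k} and notation as in the definition: c_{i_1, j_1} ≤ c_{i_1+1, j_1+1} and c_{i_k, j_k} ≥ c_{i_k+1, j_k+1}; and for every right component X (in the case where both slices are complete): c_{i_1, j_1} ≥ c_{i_1+1, j_1+1} and c_{i_k, j_k} ≤ c_{i_k+1, j_k+1}. -/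
attribute [local instance] Classical.propDecidable

/-- Position of the `m`-th vertex (0-based; quiver vertex `m+1`) of the slice `S_z` of the
translation quiver `ℕQ_k`, as a positive root `(i, j) ↔ α_i + ... + α_j`.  The slice starts
at `(z, z)` and moves according to the orientation `ε` of the edges of the quiver `Q`
(`ε m = true` means edge `m` is oriented to the right, `false` to the left). -/
def slicePos (ε : ℕ → Bool) (z : ℕ) : ℕ → ℤ × ℤ
  | 0 => ((z : ℤ), (z : ℤ))
  | m + 1 =>
    let p := slicePos ε z m
    if ε (m + 1) then (p.1, p.2 + 1) else (p.1 - 1, p.2)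

/-- The `m`-th vertex of the slice `S_z` lies in the Auslander–Reiten quiver `A(Q_k)`,
i.e. it is a genuine positive root of `A_n` (so it belongs to `T_z = S_z ∩ A(Q_k)`). -/
def inRange (n : ℕ) (ε : ℕ → Bool) (z m : ℕ) : Prop :=
  1 ≤ (slicePos ε z m).1 ∧ (slicePos ε z m).2 ≤ (n : ℤ)

/-- Edges `e, e+1, ..., e'` of the quiver form a left component: all oriented left,
maximal among such. -/
def IsLeftComp (n : ℕ) (ε : ℕ → Bool) (e e' : ℕ) : Prop :=
  1 ≤ e ∧ e ≤ e' ∧ e' ≤ n - 1 ∧ (∀ m, e ≤ m → m ≤ e' → ε m = false) ∧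
    (2 ≤ e → ε (e - 1) = true) ∧ (e' + 1 ≤ n - 1 → ε (e' + 1) = true)

/-- Edges `e, e+1, ..., e'` of the quiver form a right component: all oriented right,
maximal among such. -/
def IsRightComp (n : ℕ) (ε : ℕ → Bool) (e e' : ℕ) : Prop :=
  1 ≤ e ∧ e ≤ e' ∧ e' ≤ n - 1 ∧ (∀ m, e ≤ m → m ≤ e' → ε m = true) ∧
    (2 ≤ e → ε (e - 1) = false) ∧ (e' + 1 ≤ n - 1 → ε (e' + 1) = false)

/-- Both slices `T_z(X)` and `T_{z+1}(X)` of the component `X` with edges `e..e'` are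
complete, i.e. `S_z(X) = T_z(X)` and `S_{z+1}(X) = T_{z+1}(X)`. -/
def SlicesComplete (n : ℕ) (ε : ℕ → Bool) (e e' z : ℕ) : Prop :=
  ∀ m ∈ Finset.Icc (e - 1) e', inRange n ε z m ∧ inRange n ε (z + 1) m

/-- Membership in the cone `L_PBW(Q)` (Section 7 of the paper): the inequalities
(L1)–(L6).  Here the component `X` has edges `e..e'`, its part of the slice `T_z` is
`{slicePos ε z m : e - 1 ≤ m ≤ e'}` (intersected with `A(Q_k)`), and the vertex `y_t` of
`T_{z+1}(X)` corresponding to `x_t = slicePos ε z m` is `slicePos ε (z+1) m`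
(the root shifted by `(1,1)`). -/
def MemLPBW (n : ℕ) (ε : ℕ → Bool) (c : ℤ × ℤ → ℤ) : Prop :=
  -- (L1)
  (∀ e e' z, IsLeftComp n ε e e' → 1 ≤ z → z + 1 ≤ n → SlicesComplete n ε e e' z →
    ∑ m ∈ Finset.Icc (e - 1) e', c (slicePos ε (z + 1) m) ≤
      ∑ m ∈ Finset.Icc (e - 1) e', c (slicePos ε z m)) ∧
  -- (L2)
  (∀ e e' z m, IsLeftComp n ε e e' → 1 ≤ z → z + 1 ≤ n → e ≤ m → m + 1 ≤ e' →
    inRange n ε z m → inRange n ε z (m + 1) →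
    c (slicePos ε z m) ≤ c (slicePos ε (z + 1) m)) ∧
  -- (L3)
  (∀ e e' z, IsRightComp n ε e e' → 1 ≤ z → z + 1 ≤ n → SlicesComplete n ε e e' z →
    ∑ m ∈ Finset.Icc (e - 1) e', c (slicePos ε z m) ≤
      ∑ m ∈ Finset.Icc (e - 1) e', c (slicePos ε (z + 1) m)) ∧
  -- (L4)
  (∀ e e' z m, IsRightComp n ε e e' → 1 ≤ z → z + 1 ≤ n → e ≤ m → m + 1 ≤ e' →
    inRange n ε (z + 1) m → inRange n ε (z + 1) (m + 1) →
    c (slicePos ε (z + 1) m) ≤ c (slicePos ε z m)) ∧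
  -- (L5): leftmost component a left component
  (∀ e', IsLeftComp n ε 1 e' → ∀ z, 1 ≤ z → z + 1 ≤ n →
    c (slicePos ε z 0) ≤ c (slicePos ε (z + 1) 0)) ∧
  -- (L6): leftmost component a right component
  (∀ e', IsRightComp n ε 1 e' → ∀ z, 1 ≤ z → z + 1 ≤ n →
    c (slicePos ε (z + 1) 0) ≤ c (slicePos ε z 0))

/-- Membership in the degeneration cone `C_PBW(Q)` (Section 6 of the paper):
inequalities (C1) and (C2). -/
def MemCPBW (n : ℕ) (ε : ℕ → Bool) (c : ℤ × ℤ → ℤ) : Prop :=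
  -- (C1)
  (∀ e e' z m₀, IsLeftComp n ε e e' → 1 ≤ z → z + 1 ≤ n → SlicesComplete n ε e e' z →
    e - 1 ≤ m₀ → m₀ ≤ e' →
    ∑ m ∈ Finset.Icc m₀ e', c (slicePos ε (z + 1) m) ≤
      ∑ m ∈ Finset.Icc m₀ e', c (slicePos ε z m)) ∧
  -- (C2)
  (∀ e e' z m, IsRightComp n ε e e' → 1 ≤ z → z + 1 ≤ n → e - 1 ≤ m → m + 1 ≤ e' →
    inRange n ε z m → inRange n ε (z + 1) (m + 1) →
    c (slicePos ε (z + 1) m) ≤ c (slicePos ε z m))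


/-!
Summing (L1) and subtracting the interior inequalities (L2) leaves, for a left component,
`c(x_1) + c(x_k) ≥ c(y_1) + c(y_k)`; (L3) and (L4) give the reverse inequality for a right
component. The first vertex of a component is the last vertex of the component to its left,
which has the opposite orientation. Hence the inequality at `x_1` propagates from left to right,
starting from (L5) or (L6) at the leftmost component, and the one at `x_k` then follows from the
two-vertex inequality.
-/

open Finset

theorem Finset.sum_Icc_eq_add_sum_Ioo_add {α M : Type*} [PartialOrder α] [LocallyFiniteOrder α]
    [AddCommMonoid M] {a b : α} (h : a < b) (f : α → M) :
    ∑ x ∈ Icc a b, f x = f a + ∑ x ∈ Ioo a b, f x + f b := by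
  rw [Icc_eq_cons_Ioc h.le, sum_cons, Ioc_eq_cons_Ioo h, sum_cons, add_comm (f b), add_assoc]

section Slices

variable {n : ℕ} {ε : ℕ → Bool} {z : ℕ}

theorem slicePos_fst_antitone (ε : ℕ → Bool) (z : ℕ) : Antitone fun m => (slicePos ε z m).1 :=
  antitone_nat_of_succ_le fun m => by cases h : ε (m + 1) <;> simp [slicePos, h]

theorem slicePos_snd_monotone (ε : ℕ → Bool) (z : ℕ) : Monotone fun m => (slicePos ε z m).2 :=
  monotone_nat_of_le_succ fun m => by cases h : ε (m + 1) <;> simp [slicePos, h]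

theorem inRange.mono {m' m : ℕ} (h : m' ≤ m) (hm : inRange n ε z m) : inRange n ε z m' :=
  ⟨hm.1.trans (slicePos_fst_antitone ε z h), (slicePos_snd_monotone ε z h).trans hm.2⟩

theorem slicesComplete_of_inRange {a b m : ℕ} (hb : b ≤ m) (hz : inRange n ε z m)
    (hz' : inRange n ε (z + 1) m) : SlicesComplete n ε a b z := fun _ hk =>
  ⟨hz.mono ((mem_Icc.1 hk).2.trans hb), hz'.mono ((mem_Icc.1 hk).2.trans hb)⟩

end Slices

theorem exists_maximal_run_ending_at (ε : ℕ → Bool) (v : Bool) {b : ℕ} (hb : 1 ≤ b)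
    (hv : ε b = v) :
    ∃ a, 1 ≤ a ∧ a ≤ b ∧ (∀ m, a ≤ m → m ≤ b → ε m = v) ∧ (2 ≤ a → ε (a - 1) = !v) := by
  induction b, hb using Nat.le_induction with
  | base => exact ⟨1, le_rfl, le_rfl, fun m h1 h2 => by rwa [le_antisymm h2 h1], by omega⟩
  | succ b hb ih =>
    by_cases hprev : ε b = v
    · obtain ⟨a, ha, hab, hrun, hstart⟩ := ih hprev
      refine ⟨a, ha, by omega, fun m h1 h2 => ?_, hstart⟩
      rcases Nat.lt_or_ge m (b + 1) with hm | hm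
      · exact hrun m h1 (by omega)
      · rwa [le_antisymm h2 hm]
    · exact ⟨b + 1, by omega, le_rfl, fun m h1 h2 => by rwa [le_antisymm h2 h1],
        fun _ => by simpa using Bool.eq_not_iff.2 hprev⟩

section Components

variable {n : ℕ} {ε : ℕ → Bool} {e e' : ℕ}

theorem IsLeftComp.exists_isRightComp_before (h : IsLeftComp n ε e e') (he : 2 ≤ e) :
    ∃ a, IsRightComp n ε a (e - 1) := by
  obtain ⟨-, hee, hen, hrun, hprev, -⟩ := h
  obtain ⟨a, ha, hae, harun, hastart⟩ :=
    exists_maximal_run_ending_at ε true (b := e - 1) (by omega) (hprev he)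
  refine ⟨a, ha, hae, by omega, harun, by simpa using hastart, fun _ => ?_⟩
  rw [Nat.sub_add_cancel (by omega : 1 ≤ e)]
  exact hrun e le_rfl hee

theorem IsRightComp.exists_isLeftComp_before (h : IsRightComp n ε e e') (he : 2 ≤ e) :
    ∃ a, IsLeftComp n ε a (e - 1) := by
  obtain ⟨-, hee, hen, hrun, hprev, -⟩ := h
  obtain ⟨a, ha, hae, harun, hastart⟩ :=
    exists_maximal_run_ending_at ε false (b := e - 1) (by omega) (hprev he)
  refine ⟨a, ha, hae, by omega, harun, by simpa using hastart, fun _ => ?_⟩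
  rw [Nat.sub_add_cancel (by omega : 1 ≤ e)]
  exact hrun e le_rfl hee

end Components

namespace MemLPBW

variable {n : ℕ} {ε : ℕ → Bool} {c : ℤ × ℤ → ℤ} {e e' z : ℕ}

theorem endpoints_sum_le_of_isLeftComp (hL : MemLPBW n ε c) (h : IsLeftComp n ε e e')
    (hz : 1 ≤ z) (hzn : z + 1 ≤ n) (hs : SlicesComplete n ε e e' z) :
    c (slicePos ε (z + 1) (e - 1)) + c (slicePos ε (z + 1) e') ≤
      c (slicePos ε z (e - 1)) + c (slicePos ε z e') := by
  have hlt : e - 1 < e' := by have := h.1; have := h.2.1; omega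
  have hsum := hL.1 e e' z h hz hzn hs
  rw [sum_Icc_eq_add_sum_Ioo_add hlt, sum_Icc_eq_add_sum_Ioo_add hlt] at hsum
  have hinterior : ∑ m ∈ Ioo (e - 1) e', c (slicePos ε z m) ≤
      ∑ m ∈ Ioo (e - 1) e', c (slicePos ε (z + 1) m) := by
    refine sum_le_sum fun m hm => ?_
    rw [mem_Ioo] at hm
    exact hL.2.1 e e' z m h hz hzn (by omega) (by omega)
      (hs m (mem_Icc.2 (by omega))).1 (hs (m + 1) (mem_Icc.2 (by omega))).1
  linarith

theorem endpoints_sum_le_of_isRightComp (hL : MemLPBW n ε c) (h : IsRightComp n ε e e')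
    (hz : 1 ≤ z) (hzn : z + 1 ≤ n) (hs : SlicesComplete n ε e e' z) :
    c (slicePos ε z (e - 1)) + c (slicePos ε z e') ≤
      c (slicePos ε (z + 1) (e - 1)) + c (slicePos ε (z + 1) e') := by
  have hlt : e - 1 < e' := by have := h.1; have := h.2.1; omega
  have hsum := hL.2.2.1 e e' z h hz hzn hs
  rw [sum_Icc_eq_add_sum_Ioo_add hlt, sum_Icc_eq_add_sum_Ioo_add hlt] at hsum
  have hinterior : ∑ m ∈ Ioo (e - 1) e', c (slicePos ε (z + 1) m) ≤
      ∑ m ∈ Ioo (e - 1) e', c (slicePos ε z m) := by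
    refine sum_le_sum fun m hm => ?_
    rw [mem_Ioo] at hm
    exact hL.2.2.2.1 e e' z m h hz hzn (by omega) (by omega)
      (hs m (mem_Icc.2 (by omega))).2 (hs (m + 1) (mem_Icc.2 (by omega))).2
  linarith

theorem first_vertex_inequalities (hL : MemLPBW n ε c) (e : ℕ) :
    (∀ e' z, IsLeftComp n ε e e' → 1 ≤ z → z + 1 ≤ n → SlicesComplete n ε e e' z →
      c (slicePos ε z (e - 1)) ≤ c (slicePos ε (z + 1) (e - 1))) ∧
    (∀ e' z, IsRightComp n ε e e' → 1 ≤ z → z + 1 ≤ n → SlicesComplete n ε e e' z →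
      c (slicePos ε (z + 1) (e - 1)) ≤ c (slicePos ε z (e - 1))) := by
  induction e using Nat.strong_induction_on with
  | _ e ih =>
    constructor
    · intro e' z h hz hzn hs
      obtain he | he := Nat.lt_or_ge e 2
      · obtain rfl : e = 1 := by have := h.1; omega
        exact hL.2.2.2.2.1 e' h z hz hzn
      obtain ⟨a, hprev⟩ := h.exists_isRightComp_before he
      have hs' := hs (e - 1) (mem_Icc.2 ⟨le_rfl, by have := h.2.1; omega⟩)
      have hsprev : SlicesComplete n ε a (e - 1) z := slicesComplete_of_inRange le_rfl hs'.1 hs'.2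
      have := (ih a (by have := hprev.2.1; omega)).2 (e - 1) z hprev hz hzn hsprev
      have := hL.endpoints_sum_le_of_isRightComp hprev hz hzn hsprev
      linarith
    · intro e' z h hz hzn hs
      obtain he | he := Nat.lt_or_ge e 2
      · obtain rfl : e = 1 := by have := h.1; omega
        exact hL.2.2.2.2.2 e' h z hz hzn
      obtain ⟨a, hprev⟩ := h.exists_isLeftComp_before he
      have hs' := hs (e - 1) (mem_Icc.2 ⟨le_rfl, by have := h.2.1; omega⟩)
      have hsprev : SlicesComplete n ε a (e - 1) z := slicesComplete_of_inRange le_rfl hs'.1 hs'.2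
      have := (ih a (by have := hprev.2.1; omega)).1 (e - 1) z hprev hz hzn hsprev
      have := hL.endpoints_sum_le_of_isLeftComp hprev hz hzn hsprev
      linarith

end MemLPBW

theorem LPBW_boundary_inequalities_general
    (n : ℕ) (ε : ℕ → Bool) (c : ℤ × ℤ → ℤ)
    (hL : MemLPBW n ε c) :
    (∀ e e' z, IsLeftComp n ε e e' → 1 ≤ z → z + 1 ≤ n → SlicesComplete n ε e e' z →
      c (slicePos ε z (e - 1)) ≤ c (slicePos ε (z + 1) (e - 1)) ∧
      c (slicePos ε (z + 1) e') ≤ c (slicePos ε z e')) ∧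
    (∀ e e' z, IsRightComp n ε e e' → 1 ≤ z → z + 1 ≤ n → SlicesComplete n ε e e' z →
      c (slicePos ε (z + 1) (e - 1)) ≤ c (slicePos ε z (e - 1)) ∧
      c (slicePos ε z e') ≤ c (slicePos ε (z + 1) e')) := by
  constructor
  · intro e e' z h hz hzn hs
    have hfirst := (hL.first_vertex_inequalities e).1 e' z h hz hzn hs
    have hsum := hL.endpoints_sum_le_of_isLeftComp h hz hzn hs
    exact ⟨hfirst, by linarith⟩
  · intro e e' z h hz hzn hs
    have hfirst := (hL.first_vertex_inequalities e).2 e' z h hz hzn hs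
    have hsum := hL.endpoints_sum_le_of_isRightComp h hz hzn hs
    exact ⟨hfirst, by linarith⟩

/-- (Lemma 8.1) If `c ∈ L_PBW(Q)` then for every left component `X` of `Q` (with both
slices complete), writing `T_z(X) = {x_1, ..., x_k}` (so `x_1` is the vertex at `m = e-1`
and `x_k` the one at `m = e'`): (I) `c_{i_1,j_1} ≤ c_{i_1+1,j_1+1}` and
(II) `c_{i_k,j_k} ≥ c_{i_k+1,j_k+1}`; and for every right component (with both slices
complete): (III) `c_{i_1,j_1} ≥ c_{i_1+1,j_1+1}` and (IV) `c_{i_k,j_k} ≤ c_{i_k+1,j_k+1}`. -/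
theorem LPBW_boundary_inequalities
    (n : ℕ) (ε : ℕ → Bool) (c : ℤ × ℤ → ℤ)
    (hc : ∀ i j : ℤ, 1 ≤ i → i ≤ j → j ≤ (n : ℤ) → 0 ≤ c (i, j))
    (hL : MemLPBW n ε c) :
    (∀ e e' z, IsLeftComp n ε e e' → 1 ≤ z → z + 1 ≤ n → SlicesComplete n ε e e' z →
      c (slicePos ε z (e - 1)) ≤ c (slicePos ε (z + 1) (e - 1)) ∧
      c (slicePos ε (z + 1) e') ≤ c (slicePos ε z e')) ∧
    (∀ e e' z, IsRightComp n ε e e' → 1 ≤ z → z + 1 ≤ n → SlicesComplete n ε e e' z →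
      c (slicePos ε (z + 1) (e - 1)) ≤ c (slicePos ε z (e - 1)) ∧
      c (slicePos ε z e') ≤ c (slicePos ε (z + 1) e')) :=
  LPBW_boundary_inequalities_general n ε c hL
end

section
/- Let Q be any quiver of type A_n. Then L_PBW(Q) ⊆ C_PBW(Q), i.e. every point c = (c_{ij}) ∈ ℕ^N satisfying the defining inequalities (L1)–(L6) of L_PBW(Q) also satisfies the defining inequalities (C1) and (C2) of C_PBW(Q). -/
attribute [local instance] Classical.propDecidable

lemma slicePos_succ (ε : ℕ → Bool) (z m : ℕ) :
    slicePos ε z (m + 1) =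
      if ε (m + 1) then ((slicePos ε z m).1, (slicePos ε z m).2 + 1)
      else ((slicePos ε z m).1 - 1, (slicePos ε z m).2) := rfl

lemma slicePos_mono (ε : ℕ → Bool) (z : ℕ) :
    ∀ {m m' : ℕ}, m ≤ m' →
      (slicePos ε z m').1 ≤ (slicePos ε z m).1 ∧
        (slicePos ε z m).2 ≤ (slicePos ε z m').2 := by
  intro m m' h
  induction m' with
  | zero =>
    interval_cases m
    exact ⟨le_refl _, le_refl _⟩
  | succ k ih =>
    rcases Nat.lt_or_ge m (k + 1) with h' | h'
    · have hk := ih (Nat.lt_succ_iff.mp h')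
      rw [slicePos_succ]
      by_cases hε : ε (k + 1) <;> simp [hε] <;>
        exact ⟨by linarith [hk.1], by linarith [hk.2]⟩
    · have : m = k + 1 := le_antisymm h h'
      subst this
      exact ⟨le_refl _, le_refl _⟩

lemma inRange_mono (n : ℕ) (ε : ℕ → Bool) (z : ℕ) {m m' : ℕ} (h : m ≤ m')
    (h' : inRange n ε z m') : inRange n ε z m := by
  obtain ⟨h1, h2⟩ := h'
  obtain ⟨g1, g2⟩ := slicePos_mono ε z h
  exact ⟨le_trans h1 g1, le_trans g2 h2⟩

lemma endpoint_ineq (n : ℕ) (ε : ℕ → Bool) (c : ℤ × ℤ → ℤ) (hL : MemLPBW n ε c) :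
    ∀ e e' z, 1 ≤ z → z + 1 ≤ n →
      (∀ k, k ≤ e - 1 → inRange n ε z k ∧ inRange n ε (z + 1) k) →
      (IsLeftComp n ε e e' →
        c (slicePos ε z (e - 1)) ≤ c (slicePos ε (z + 1) (e - 1))) ∧
      (IsRightComp n ε e e' →
        c (slicePos ε (z + 1) (e - 1)) ≤ c (slicePos ε z (e - 1))) := by
  obtain ⟨L1, L2, L3, L4, L5, L6⟩ := hL
  intro e
  induction e using Nat.strong_induction_on with
  | _ e IH =>
  intro e' z hz hzn hall
  rcases Nat.lt_or_ge e 2 with he2 | he2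
  · constructor
    · intro hcomp
      have he1 : e = 1 := by have := hcomp.1; omega
      subst he1
      exact L5 e' hcomp z hz hzn
    · intro hcomp
      have he1 : e = 1 := by have := hcomp.1; omega
      subst he1
      exact L6 e' hcomp z hz hzn
  · constructor
    · -- left component, e ≥ 2, so ε (e-1) = true; previous is a right component
      intro hcomp
      obtain ⟨hc1, hc2, hc3, hc4, hc5, hc6⟩ := hcomp
      have hprev : ε (e - 1) = true := hc5 he2
      have hwit : 1 ≤ e - 1 ∧ ∀ m, e - 1 ≤ m → m ≤ e - 1 → ε m = true := by
        refine ⟨by omega, ?_⟩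
        intro m hm1 hm2
        have hme : m = e - 1 := by omega
        rw [hme]
        exact hprev
      have hPex : ∃ f, 1 ≤ f ∧ ∀ m, f ≤ m → m ≤ e - 1 → ε m = true := ⟨e - 1, hwit⟩
      classical
      set f := Nat.find hPex with hf
      obtain ⟨hf1, hfspec⟩ := Nat.find_spec hPex
      have hfle : f ≤ e - 1 := Nat.find_le hwit
      have hrc : IsRightComp n ε f (e - 1) := by
        refine ⟨hf1, hfle, by omega, hfspec, ?_, ?_⟩
        · intro hf2
          by_contra hne
          have hεf : ε (f - 1) = true := by
            cases h : ε (f - 1)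
            · exact absurd h hne
            · rfl
          have hwit2 : 1 ≤ f - 1 ∧ ∀ m, f - 1 ≤ m → m ≤ e - 1 → ε m = true := by
            refine ⟨by omega, ?_⟩
            intro m hm1 hm2
            rcases Nat.lt_or_ge m f with hmf | hmf
            · have hme : m = f - 1 := by omega
              rw [hme]
              exact hεf
            · exact hfspec m hmf hm2
          have : f ≤ f - 1 := Nat.find_le hwit2
          omega
        · intro h
          have heq : (e - 1) + 1 = e := by omega
          rw [heq]
          exact hc4 e (le_refl e) hc2
      have hallf : ∀ k, k ≤ f - 1 → inRange n ε z k ∧ inRange n ε (z + 1) k := by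
        intro k hk
        exact hall k (by omega)
      have hIH : c (slicePos ε (z + 1) (f - 1)) ≤ c (slicePos ε z (f - 1)) :=
        (IH f (by omega) (e - 1) z hz hzn hallf).2 hrc
      have hsc : SlicesComplete n ε f (e - 1) z := by
        intro m hm
        rw [Finset.mem_Icc] at hm
        exact hall m (by omega)
      have hsum := L3 f (e - 1) z hrc hz hzn hsc
      have hterm : ∀ m ∈ Finset.Icc (f - 1) (e - 2),
          c (slicePos ε (z + 1) m) ≤ c (slicePos ε z m) := by
        intro m hm
        rw [Finset.mem_Icc] at hm
        rcases Nat.lt_or_ge m f with hmf | hmf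
        · have hme : m = f - 1 := by omega
          rw [hme]
          exact hIH
        · refine L4 f (e - 1) z m hrc hz hzn hmf (by omega) ?_ ?_
          · exact (hall m (by omega)).2
          · exact (hall (m + 1) (by omega)).2
      have hsum2 : ∑ m ∈ Finset.Icc (f - 1) (e - 2), c (slicePos ε (z + 1) m) ≤
          ∑ m ∈ Finset.Icc (f - 1) (e - 2), c (slicePos ε z m) :=
        Finset.sum_le_sum hterm
      have hsplit : ∀ g : ℕ → ℤ, ∑ m ∈ Finset.Icc (f - 1) (e - 1), g m =
          (∑ m ∈ Finset.Icc (f - 1) (e - 2), g m) + g (e - 1) := by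
        intro g
        have h1 : e - 1 = (e - 2) + 1 := by omega
        rw [h1, Finset.sum_Icc_succ_top (by omega)]
      have e1 := hsplit (fun m => c (slicePos ε z m))
      have e2 := hsplit (fun m => c (slicePos ε (z + 1) m))
      linarith
    · -- right component, e ≥ 2, so ε (e-1) = false; previous is a left component
      intro hcomp
      obtain ⟨hc1, hc2, hc3, hc4, hc5, hc6⟩ := hcomp
      have hprev : ε (e - 1) = false := hc5 he2
      have hwit : 1 ≤ e - 1 ∧ ∀ m, e - 1 ≤ m → m ≤ e - 1 → ε m = false := by
        refine ⟨by omega, ?_⟩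
        intro m hm1 hm2
        have hme : m = e - 1 := by omega
        rw [hme]
        exact hprev
      have hPex : ∃ f, 1 ≤ f ∧ ∀ m, f ≤ m → m ≤ e - 1 → ε m = false := ⟨e - 1, hwit⟩
      classical
      set f := Nat.find hPex with hf
      obtain ⟨hf1, hfspec⟩ := Nat.find_spec hPex
      have hfle : f ≤ e - 1 := Nat.find_le hwit
      have hlc : IsLeftComp n ε f (e - 1) := by
        refine ⟨hf1, hfle, by omega, hfspec, ?_, ?_⟩
        · intro hf2
          by_contra hne
          have hεf : ε (f - 1) = false := by
            cases h : ε (f - 1)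
            · rfl
            · exact absurd h hne
          have hwit2 : 1 ≤ f - 1 ∧ ∀ m, f - 1 ≤ m → m ≤ e - 1 → ε m = false := by
            refine ⟨by omega, ?_⟩
            intro m hm1 hm2
            rcases Nat.lt_or_ge m f with hmf | hmf
            · have hme : m = f - 1 := by omega
              rw [hme]
              exact hεf
            · exact hfspec m hmf hm2
          have : f ≤ f - 1 := Nat.find_le hwit2
          omega
        · intro h
          have heq : (e - 1) + 1 = e := by omega
          rw [heq]
          exact hc4 e (le_refl e) hc2
      have hallf : ∀ k, k ≤ f - 1 → inRange n ε z k ∧ inRange n ε (z + 1) k := by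
        intro k hk
        exact hall k (by omega)
      have hIH : c (slicePos ε z (f - 1)) ≤ c (slicePos ε (z + 1) (f - 1)) :=
        (IH f (by omega) (e - 1) z hz hzn hallf).1 hlc
      have hsc : SlicesComplete n ε f (e - 1) z := by
        intro m hm
        rw [Finset.mem_Icc] at hm
        exact hall m (by omega)
      have hsum := L1 f (e - 1) z hlc hz hzn hsc
      have hterm : ∀ m ∈ Finset.Icc (f - 1) (e - 2),
          c (slicePos ε z m) ≤ c (slicePos ε (z + 1) m) := by
        intro m hm
        rw [Finset.mem_Icc] at hm
        rcases Nat.lt_or_ge m f with hmf | hmf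
        · have hme : m = f - 1 := by omega
          rw [hme]
          exact hIH
        · refine L2 f (e - 1) z m hlc hz hzn hmf (by omega) ?_ ?_
          · exact (hall m (by omega)).1
          · exact (hall (m + 1) (by omega)).1
      have hsum2 : ∑ m ∈ Finset.Icc (f - 1) (e - 2), c (slicePos ε z m) ≤
          ∑ m ∈ Finset.Icc (f - 1) (e - 2), c (slicePos ε (z + 1) m) :=
        Finset.sum_le_sum hterm
      have hsplit : ∀ g : ℕ → ℤ, ∑ m ∈ Finset.Icc (f - 1) (e - 1), g m =
          (∑ m ∈ Finset.Icc (f - 1) (e - 2), g m) + g (e - 1) := by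
        intro g
        have h1 : e - 1 = (e - 2) + 1 := by omega
        rw [h1, Finset.sum_Icc_succ_top (by omega)]
      have e1 := hsplit (fun m => c (slicePos ε z m))
      have e2 := hsplit (fun m => c (slicePos ε (z + 1) m))
      linarith

/-- For any quiver `Q` of type `A_n`, `L_PBW(Q) ⊆ C_PBW(Q)`: every nonnegative triangle
`c = (c_{ij})` satisfying the defining inequalities (L1)–(L6) of `L_PBW(Q)` also satisfies
the defining inequalities (C1) and (C2) of the degeneration cone `C_PBW(Q)`. -/
theorem LPBW_subset_CPBW
    (n : ℕ) (ε : ℕ → Bool) (c : ℤ × ℤ → ℤ)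
    (hc : ∀ i j : ℤ, 1 ≤ i → i ≤ j → j ≤ (n : ℤ) → 0 ≤ c (i, j))
    (hL : MemLPBW n ε c) :
    MemCPBW n ε c := by
  obtain ⟨L1, L2, L3, L4, L5, L6⟩ := hL
  constructor
  · -- (C1)
    intro e e' z m₀ hcomp hz hzn hsc hm1 hm2
    have hee' : e ≤ e' := hcomp.2.1
    have hall : ∀ k, k ≤ e - 1 → inRange n ε z k ∧ inRange n ε (z + 1) k := by
      intro k hk
      have hmem : e - 1 ∈ Finset.Icc (e - 1) e' := by
        rw [Finset.mem_Icc]; omega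
      obtain ⟨h1, h2⟩ := hsc (e - 1) hmem
      exact ⟨inRange_mono n ε z hk h1, inRange_mono n ε (z + 1) hk h2⟩
    have hA : c (slicePos ε z (e - 1)) ≤ c (slicePos ε (z + 1) (e - 1)) :=
      (endpoint_ineq n ε c ⟨L1, L2, L3, L4, L5, L6⟩ e e' z hz hzn hall).1 hcomp
    have htotal := L1 e e' z hcomp hz hzn hsc
    have hterm : ∀ m ∈ Finset.Ico (e - 1) m₀,
        c (slicePos ε z m) ≤ c (slicePos ε (z + 1) m) := by
      intro m hm
      rw [Finset.mem_Ico] at hm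
      rcases Nat.lt_or_ge m e with hme | hme
      · have : m = e - 1 := by omega
        rw [this]; exact hA
      · refine L2 e e' z m hcomp hz hzn hme (by omega) ?_ ?_
        · exact (hsc m (by rw [Finset.mem_Icc]; omega)).1
        · exact (hsc (m + 1) (by rw [Finset.mem_Icc]; omega)).1
    have hprefix : ∑ m ∈ Finset.Ico (e - 1) m₀, c (slicePos ε z m) ≤
        ∑ m ∈ Finset.Ico (e - 1) m₀, c (slicePos ε (z + 1) m) :=
      Finset.sum_le_sum hterm
    have hsplit : ∀ g : ℕ → ℤ, ∑ m ∈ Finset.Icc (e - 1) e', g m =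
        (∑ m ∈ Finset.Ico (e - 1) m₀, g m) + ∑ m ∈ Finset.Icc m₀ e', g m := by
      intro g
      rw [← Finset.Ico_add_one_right_eq_Icc m₀ e', ← Finset.Ico_add_one_right_eq_Icc (e - 1) e',
        Finset.sum_Ico_consecutive _ hm1 (by omega)]
    have e1 := hsplit (fun m => c (slicePos ε z m))
    have e2 := hsplit (fun m => c (slicePos ε (z + 1) m))
    linarith
  · -- (C2)
    intro e e' z m hcomp hz hzn hm1 hm2 hr1 hr2
    rcases Nat.lt_or_ge m e with hme | hme
    · -- m = e - 1: use the endpoint lemma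
      have hmeq : m = e - 1 := by omega
      have hall : ∀ k, k ≤ e - 1 → inRange n ε z k ∧ inRange n ε (z + 1) k := by
        intro k hk
        constructor
        · exact inRange_mono n ε z (by omega) hr1
        · exact inRange_mono n ε (z + 1) (by omega : k ≤ m + 1) hr2
      rw [hmeq]
      exact (endpoint_ineq n ε c ⟨L1, L2, L3, L4, L5, L6⟩ e e' z hz hzn hall).2 hcomp
    · -- e ≤ m: directly (L4)
      refine L4 e e' z m hcomp hz hzn hme hm2 ?_ hr2
      exact inRange_mono n ε (z + 1) (Nat.le_succ m) hr2
end

section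
/- (Lemma 9.1) Fix 1 ≤ i ≤ j ≤ n and s ∈ ℕ, and let (c_{kl})_{1 ≤ k ≤ l ≤ n} be a triangle of nonnegative integers satisfying: (a) Σ_{l=k+1}^i c_{lj} ≥ Σ_{l=k}^{i-1} c_{l,j-1} for k = 1,...,i−1, and (b) s ≤ Σ_{l=i}^{k-1} c_{l,j-1} − Σ_{l=i+1}^k c_{lj} for k = i+1,...,j. Then the s-fold application of the operator F̃_j (defined combinatorially below) to (c_{kl}) increases c_{ij} by s, decreases c_{i,j-1} by s (this latter only if i < j), and leaves all other entries unchanged. -/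
attribute [local instance] Classical.propDecidable

/-- The quantity `f_{pj} = Σ_{k=1}^p c_{kj} − Σ_{k=1}^{p-1} c_{k,j-1}` of
Proposition 9.1 (Reineke). -/
def fval (c : ℕ → ℕ → ℤ) (p j : ℕ) : ℤ :=
  (∑ k ∈ Finset.Icc 1 p, c k j) - ∑ k ∈ Finset.Icc 1 (p - 1), c k (j - 1)

/-- The maximal index `i₀ ∈ [1, j]` with `f_{i₀ j} = max_p f_{pj}`. -/
noncomputable def argmaxF (c : ℕ → ℕ → ℤ) (j : ℕ) : ℕ :=
  WithBot.unbotD 0 (((Finset.Icc 1 j).filter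
      (fun p => ∀ q ∈ Finset.Icc 1 j, fval c q j ≤ fval c p j)).max)

/-- The combinatorial Kashiwara operator `F̃_j` on triangles (Proposition 9.1):
it increases `c_{i₀ j}` by `1`, decreases `c_{i₀, j-1}` by `1` (unless `i₀ = j`)
and fixes all other entries, where `i₀` is the maximal index attaining `max_p f_{pj}`. -/
noncomputable def Ftilde (j : ℕ) (c : ℕ → ℕ → ℤ) : ℕ → ℕ → ℤ :=
  fun k l =>
    if k = argmaxF c j ∧ l = j then c k l + 1
    else if k = argmaxF c j ∧ l = j - 1 ∧ argmaxF c j ≠ j then c k l - 1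
    else c k l

private lemma sum_Icc_one_diff (f : ℕ → ℤ) {a b : ℕ} (h : a ≤ b) :
    (∑ k ∈ Finset.Icc 1 b, f k) - ∑ k ∈ Finset.Icc 1 a, f k
      = ∑ k ∈ Finset.Icc (a + 1) b, f k := by
  have h0 : (0 : ℕ) ≤ a := Nat.zero_le a
  have H := Finset.sum_Ioc_consecutive (f := f) (M := ℤ) h0 h
  rw [show Finset.Icc 1 b = Finset.Ioc 0 b from Finset.Icc_add_one_left_eq_Ioc 0 b,
      show Finset.Icc 1 a = Finset.Ioc 0 a from Finset.Icc_add_one_left_eq_Ioc 0 a,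
      show Finset.Icc (a + 1) b = Finset.Ioc a b from Finset.Icc_add_one_left_eq_Ioc a b]
  linarith

private lemma fval_diff (c : ℕ → ℕ → ℤ) (j : ℕ) {p q : ℕ} (hp : 1 ≤ p) (hpq : p ≤ q) :
    fval c q j - fval c p j
      = (∑ k ∈ Finset.Icc (p + 1) q, c k j) - ∑ k ∈ Finset.Icc p (q - 1), c k (j - 1) := by
  have h1 := sum_Icc_one_diff (fun k => c k j) hpq
  have h2 := sum_Icc_one_diff (fun k => c k (j - 1)) (show p - 1 ≤ q - 1 by omega)
  rw [show p - 1 + 1 = p by omega] at h2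
  unfold fval
  linarith

private lemma argmaxF_eq (c : ℕ → ℕ → ℤ) {i j : ℕ} (hi : 1 ≤ i) (hij : i ≤ j)
    (hA : ∀ p, 1 ≤ p → p ≤ i → fval c p j ≤ fval c i j)
    (hB : ∀ q, i < q → q ≤ j → fval c q j < fval c i j) :
    argmaxF c j = i := by
  have key : ∀ S : Finset ℕ, i ∈ S → (∀ b ∈ S, b ≤ i) → WithBot.unbotD 0 S.max = i := by
    intro S hiS hle
    have hmax : S.max = (i : WithBot ℕ) :=
      le_antisymm (Finset.max_le fun b hb => WithBot.coe_le_coe.mpr (hle b hb))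
        (Finset.le_max hiS)
    rw [hmax]; rfl
  unfold argmaxF
  rw [Finset.filter_congr_decidable]
  apply key
  · refine Finset.mem_filter.mpr ⟨Finset.mem_Icc.mpr ⟨hi, hij⟩, fun q hq => ?_⟩
    rcases Finset.mem_Icc.mp hq with ⟨h1, h2⟩
    rcases le_or_gt q i with h | h
    · exact hA q h1 h
    · exact (hB q h h2).le
  · intro b hb
    rw [Finset.mem_filter] at hb
    by_contra hbi
    push_neg at hbi
    have h2 := (Finset.mem_Icc.mp hb.1).2
    have hle' := hb.2 i (Finset.mem_Icc.mpr ⟨hi, hij⟩)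
    exact absurd hle' (not_le.mpr (hB b hbi h2))

/-- (Lemma 9.1) Fix `1 ≤ i ≤ j ≤ n`, `s ∈ ℕ` and a triangle `(c_{kl})` of nonnegative
integers such that (a) `Σ_{l=k+1}^i c_{lj} ≥ Σ_{l=k}^{i-1} c_{l,j-1}` for `k = 1, ..., i-1`
and (b) `s ≤ Σ_{l=i}^{k-1} c_{l,j-1} − Σ_{l=i+1}^k c_{lj}` for `k = i+1, ..., j`.  Then
`F̃_j^s` acts on `(c_{kl})` by increasing `c_{ij}` by `s`, decreasing `c_{i,j-1}` by `s`
(the latter only when `i < j`), and leaving the other entries unchanged. -/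
theorem Ftilde_pow_action
    (n i j s : ℕ) (c : ℕ → ℕ → ℤ)
    (hi : 1 ≤ i) (hij : i ≤ j) (hjn : j ≤ n)
    (hc : ∀ k l, 1 ≤ k → k ≤ l → l ≤ n → 0 ≤ c k l)
    (ha : ∀ k, 1 ≤ k → k ≤ i - 1 →
      ∑ l ∈ Finset.Icc k (i - 1), c l (j - 1) ≤ ∑ l ∈ Finset.Icc (k + 1) i, c l j)
    (hb : ∀ k, i + 1 ≤ k → k ≤ j →
      (s : ℤ) ≤ (∑ l ∈ Finset.Icc i (k - 1), c l (j - 1)) -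
        ∑ l ∈ Finset.Icc (i + 1) k, c l j) :
    (Ftilde j)^[s] c = fun k l =>
      if k = i ∧ l = j then c k l + s
      else if k = i ∧ l = j - 1 ∧ i < j then c k l - s
      else c k l := by
  induction s generalizing c hc ha with
  | zero =>
    funext k l
    simp only [Function.iterate_zero, id_eq, Nat.cast_zero]
    split_ifs <;> ring
  | succ s ih =>
    -- the argmax is `i`
    have hargs : argmaxF c j = i := by
      apply argmaxF_eq c hi hij
      · intro p hp hpi
        rcases lt_or_eq_of_le hpi with hlt | rfl
        · have hd := fval_diff c j hp hpi
          have hA := ha p hp (by omega)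
          linarith
        · exact le_rfl
      · intro q hq1 hq2
        have hd := fval_diff c j hi hq1.le
        have hB := hb q hq1 hq2
        push_cast at hB
        have hs0 : (0 : ℤ) ≤ (s : ℤ) := Nat.cast_nonneg s
        linarith
    have hj1 : j - 1 ≠ j := by omega
    -- pointwise description of `Ftilde j c`
    have hcol_j : ∀ l, Ftilde j c l j = c l j + (if l = i then 1 else 0) := by
      intro l
      by_cases hl : l = i <;> simp [Ftilde, hargs, hl, hj1]
    have hcol_j1 : i < j → ∀ l,
        Ftilde j c l (j - 1) = c l (j - 1) - (if l = i then 1 else 0) := by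
      intro hij' l
      have hne : i ≠ j := Nat.ne_of_lt hij'
      by_cases hl : l = i <;> simp [Ftilde, hargs, hl, hj1, hne]
    have hother : ∀ k l, ¬(k = i ∧ l = j) → ¬(k = i ∧ l = j - 1 ∧ i ≠ j) →
        Ftilde j c k l = c k l := by
      intro k l h1 h2
      simp only [Ftilde, hargs]
      rw [if_neg h1, if_neg h2]
    -- key positivity fact
    have hkey : i < j → (1 : ℤ) + (s : ℤ) ≤ c i (j - 1) := by
      intro hij'
      have hB := hb (i + 1) le_rfl (by omega)
      rw [show i + 1 - 1 = i by omega] at hB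
      simp only [Finset.Icc_self, Finset.sum_singleton] at hB
      have hnn := hc (i + 1) j (by omega) (by omega) hjn
      push_cast at hB
      linarith
    -- the hypotheses hold for `Ftilde j c` with `s`
    have hc' : ∀ k l, 1 ≤ k → k ≤ l → l ≤ n → 0 ≤ Ftilde j c k l := by
      intro k l h1 h2 h3
      by_cases hkl : k = i ∧ l = j
      · rw [hkl.1, hkl.2, hcol_j i, if_pos rfl]
        have := hc i j hi hij hjn
        linarith
      · by_cases hkl2 : k = i ∧ l = j - 1 ∧ i ≠ j
        · have hij' : i < j := lt_of_le_of_ne hij hkl2.2.2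
          rw [hkl2.1, hkl2.2.1, hcol_j1 hij' i, if_pos rfl]
          have := hkey hij'
          have hs0 : (0 : ℤ) ≤ (s : ℤ) := Nat.cast_nonneg s
          linarith
        · rw [hother k l hkl hkl2]; exact hc k l h1 h2 h3
    have ha' : ∀ k, 1 ≤ k → k ≤ i - 1 →
        ∑ l ∈ Finset.Icc k (i - 1), Ftilde j c l (j - 1)
          ≤ ∑ l ∈ Finset.Icc (k + 1) i, Ftilde j c l j := by
      intro k h1 h2
      have e1 : ∑ l ∈ Finset.Icc k (i - 1), Ftilde j c l (j - 1)
          = ∑ l ∈ Finset.Icc k (i - 1), c l (j - 1) := by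
        refine Finset.sum_congr rfl fun l hl => ?_
        have hli : l ≠ i := by
          rcases Finset.mem_Icc.mp hl with ⟨_, h⟩; omega
        exact hother l (j - 1) (fun h => hli h.1) (fun h => hli h.1)
      have e2 : ∑ l ∈ Finset.Icc (k + 1) i, Ftilde j c l j
          = (∑ l ∈ Finset.Icc (k + 1) i, c l j) + 1 := by
        rw [Finset.sum_congr rfl (fun l _ => hcol_j l), Finset.sum_add_distrib,
          Finset.sum_ite_eq' (Finset.Icc (k + 1) i) i (fun _ => (1 : ℤ)),
          if_pos (Finset.mem_Icc.mpr ⟨by omega, le_rfl⟩)]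
      rw [e1, e2]
      have := ha k h1 h2
      linarith
    have hb' : ∀ k, i + 1 ≤ k → k ≤ j →
        (s : ℤ) ≤ (∑ l ∈ Finset.Icc i (k - 1), Ftilde j c l (j - 1)) -
          ∑ l ∈ Finset.Icc (i + 1) k, Ftilde j c l j := by
      intro k h1 h2
      have hij' : i < j := by omega
      have e1 : ∑ l ∈ Finset.Icc i (k - 1), Ftilde j c l (j - 1)
          = (∑ l ∈ Finset.Icc i (k - 1), c l (j - 1)) - 1 := by
        rw [Finset.sum_congr rfl (fun l _ => hcol_j1 hij' l), Finset.sum_sub_distrib,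
          Finset.sum_ite_eq' (Finset.Icc i (k - 1)) i (fun _ => (1 : ℤ)),
          if_pos (Finset.mem_Icc.mpr ⟨le_rfl, by omega⟩)]
      have e2 : ∑ l ∈ Finset.Icc (i + 1) k, Ftilde j c l j
          = ∑ l ∈ Finset.Icc (i + 1) k, c l j := by
        refine Finset.sum_congr rfl fun l hl => ?_
        have hli : l ≠ i := by
          rcases Finset.mem_Icc.mp hl with ⟨h, _⟩; omega
        exact hother l j (fun h => hli h.1) (fun h => hli h.1)
      have hB := hb k h1 h2
      push_cast at hB
      rw [e1, e2]
      linarith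
    rw [Function.iterate_succ_apply, ih (Ftilde j c) hc' ha' hb']
    funext k l
    show (if k = i ∧ l = j then Ftilde j c k l + (s : ℤ)
      else if k = i ∧ l = j - 1 ∧ i < j then Ftilde j c k l - (s : ℤ)
      else Ftilde j c k l) = _
    split_ifs with h1 h2
    · rw [h1.1, h1.2, hcol_j i, if_pos rfl]
      push_cast
      ring
    · rw [h2.1, h2.2.1, hcol_j1 h2.2.2 i, if_pos rfl]
      push_cast
      ring
    · exact hother k l h1 fun h => h2 ⟨h.1, h.2.1, lt_of_le_of_ne hij h.2.2⟩
end

section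
/- (Lemma 9.3) Fix 1 ≤ i ≤ j ≤ n and let (c_{kl}) be a triangle of nonnegative integers satisfying: (a) c_{kj} = 0 for k = 1,...,i, and (b) 0 ≤ Σ_{l=i}^{k-1} c_{l,j-1} − Σ_{l=i+1}^k c_{lj} for k = i+1,...,j. Then the combinatorial operator Ẽ_j kills (c_{kl}): the minimal index p_0 achieving max_p f_{pj} satisfies c_{p_0 j} = 0. -/
attribute [local instance] Classical.propDecidable

/-- The minimal index `p₀ ∈ [1, j]` with `f_{p₀ j} = max_p f_{pj}`, used by the
combinatorial Kashiwara operator `Ẽ_j`. -/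
noncomputable def argminF (c : ℕ → ℕ → ℤ) (j : ℕ) : ℕ :=
  WithTop.untopD 0 (((Finset.Icc 1 j).filter
      (fun p => ∀ q ∈ Finset.Icc 1 j, fval c q j ≤ fval c p j)).min)

/-- (Lemma 9.3) Fix `1 ≤ i ≤ j ≤ n` and let `(c_{kl})` be a triangle of nonnegative
integers with (a) `c_{kj} = 0` for `k = 1, ..., i` and
(b) `0 ≤ Σ_{l=i}^{k-1} c_{l,j-1} − Σ_{l=i+1}^k c_{lj}` for `k = i+1, ..., j`.
Then the operator `Ẽ_j` kills `(c_{kl})`: the minimal index `p₀` attaining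
`max_p f_{pj}` satisfies `c_{p₀ j} = 0`. -/
theorem Etilde_kills
    (n i j : ℕ) (c : ℕ → ℕ → ℤ)
    (hi : 1 ≤ i) (hij : i ≤ j) (hjn : j ≤ n)
    (hc : ∀ k l, 1 ≤ k → k ≤ l → l ≤ n → 0 ≤ c k l)
    (ha : ∀ k, 1 ≤ k → k ≤ i → c k j = 0)
    (hb : ∀ k, i + 1 ≤ k → k ≤ j →
      (0 : ℤ) ≤ (∑ l ∈ Finset.Icc i (k - 1), c l (j - 1)) -
        ∑ l ∈ Finset.Icc (i + 1) k, c l j) :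
    c (argminF c j) j = 0 := by
  have hj1 : 1 ≤ j := le_trans hi hij
  -- sums of `c k j` over `k ≤ i` vanish
  have hzero : ∀ p, p ≤ i → ∑ k ∈ Finset.Icc 1 p, c k j = 0 := by
    intro p hp
    apply Finset.sum_eq_zero
    intro k hk
    simp only [Finset.mem_Icc] at hk
    exact ha k hk.1 (le_trans hk.2 hp)
  -- (A) for p ≤ i, fval i ≤ fval p
  have hA : ∀ p, 1 ≤ p → p ≤ i → fval c i j ≤ fval c p j := by
    intro p h1 h2
    unfold fval
    rw [hzero i le_rfl, hzero p h2]
    simp only [zero_sub, neg_le_neg_iff]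
    apply Finset.sum_le_sum_of_subset_of_nonneg
    · exact Finset.Icc_subset_Icc le_rfl (Nat.sub_le_sub_right h2 1)
    · intro k hk _
      simp only [Finset.mem_Icc] at hk
      exact hc k (j - 1) hk.1 (by omega) (by omega)
  -- (B) for i ≤ p ≤ j, fval p ≤ fval i
  have hB : ∀ p, i ≤ p → p ≤ j → fval c p j ≤ fval c i j := by
    intro p h1 h2
    rcases eq_or_lt_of_le h1 with h | h
    · rw [h]
    · have hp : i + 1 ≤ p := h
      have hb' := hb p hp h2
      have e1 : Finset.Icc (i + 1) p = Finset.Ioc i p := by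
        ext k; simp only [Finset.mem_Icc, Finset.mem_Ioc]; omega
      have e2 : Finset.Icc i (p - 1) = Finset.Ioc (i - 1) (p - 1) := by
        ext k; simp only [Finset.mem_Icc, Finset.mem_Ioc]; omega
      have e3 : ∀ x : ℕ, Finset.Icc 1 x = Finset.Ioc 0 x := by
        intro x; ext k; simp only [Finset.mem_Icc, Finset.mem_Ioc]; omega
      rw [e1, e2] at hb'
      unfold fval
      rw [e3 p, e3 i, e3 (p - 1), e3 (i - 1)]
      have S1 : (∑ k ∈ Finset.Ioc 0 i, c k j) + ∑ k ∈ Finset.Ioc i p, c k j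
          = ∑ k ∈ Finset.Ioc 0 p, c k j :=
        Finset.sum_Ioc_consecutive _ (Nat.zero_le i) (le_of_lt h)
      have S2 : (∑ k ∈ Finset.Ioc 0 (i - 1), c k (j - 1))
          + ∑ k ∈ Finset.Ioc (i - 1) (p - 1), c k (j - 1)
          = ∑ k ∈ Finset.Ioc 0 (p - 1), c k (j - 1) :=
        Finset.sum_Ioc_consecutive _ (Nat.zero_le _) (by omega)
      linarith
  -- pick a maximizer q of fval on [1, i]
  obtain ⟨q, hq, hqmax⟩ :=
    (Finset.Icc 1 i).exists_max_image (fun p => fval c p j) ⟨i, by simp [hi]⟩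
  simp only [Finset.mem_Icc] at hq
  -- q is a global maximizer on [1, j]
  have hqS : q ∈ (Finset.Icc 1 j).filter
      (fun p => ∀ r ∈ Finset.Icc 1 j, fval c r j ≤ fval c p j) := by
    simp only [Finset.mem_filter, Finset.mem_Icc]
    refine ⟨⟨hq.1, le_trans hq.2 hij⟩, ?_⟩
    intro r hr
    rcases le_or_gt r i with h | h
    · exact hqmax r (Finset.mem_Icc.mpr ⟨hr.1, h⟩)
    · exact le_trans (hB r h.le hr.2) (hA q hq.1 hq.2)
  set S := (Finset.Icc 1 j).filter
      (fun p => ∀ r ∈ Finset.Icc 1 j, fval c r j ≤ fval c p j) with hS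
  have hne : S.Nonempty := ⟨q, hqS⟩
  have hargm : argminF c j = S.min' hne := by
    unfold argminF
    rw [← hS, ← Finset.coe_min' hne]
    rfl
  have hmem : S.min' hne ∈ Finset.Icc 1 j :=
    @Finset.mem_of_mem_filter ℕ _ (fun a => Classical.propDecidable _) _ _
      (S.min'_mem hne)
  rw [Finset.mem_Icc] at hmem
  have hle : S.min' hne ≤ q := Finset.min'_le S q hqS
  rw [hargm]
  exact ha _ hmem.1 (le_trans hle hq.2)
end

section
/- Let Q be a quiver of type A_n and i(Q) its standard compatible reduced expression. For a pair of equal letters s occurring in consecutive factors (l_p ↘ 1)(l_{p+1} ↘ 1) of i(Q) with 1 < s ≤ l_p, at positions t (first factor) and u (second factor), the Lusztig-cone inequality a_{t+1} + a_{u-1} ≥ a_t + a_u translates, under the substitution a = D(c), into: if s ≤ p, the inequality Σ_{α ∈ T_{n+1-p}, s ∈ α, s-1 ∉ α} c_α ≤ Σ_{α ∈ T_{n-p}, s+1 ∈ α, s ∉ α} c_α; and if s > p, the inequality Σ_{α ∈ T_{n+1-p}, s-1 ∈ α, s ∉ α} c_α ≥ Σ_{α ∈ T_{n-p}, s ∈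 α, s+1 ∉ α} c_α. -/
attribute [local instance] Classical.propDecidable

/-- `Σ_{α ∈ T_z, s ∈ α} c_α`: the sum of `c_α` over the roots `α` of the slice `T_z`
whose support contains the simple root `α_s`. -/
noncomputable def ASum (n : ℕ) (ε : ℕ → Bool) (c : ℤ × ℤ → ℤ) (z : ℕ) (s : ℤ) : ℤ :=
  ∑ m ∈ Finset.range n,
    if inRange n ε z m ∧ (slicePos ε z m).1 ≤ s ∧ s ≤ (slicePos ε z m).2
    then c (slicePos ε z m) else 0

/-- `Σ_{α ∈ T_z, s ∈ α, s' ∉ α} c_α`. -/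
noncomputable def BSum (n : ℕ) (ε : ℕ → Bool) (c : ℤ × ℤ → ℤ) (z : ℕ) (s s' : ℤ) : ℤ :=
  ∑ m ∈ Finset.range n,
    if inRange n ε z m ∧ (slicePos ε z m).1 ≤ s ∧ s ≤ (slicePos ε z m).2 ∧
        ¬((slicePos ε z m).1 ≤ s' ∧ s' ≤ (slicePos ε z m).2)
    then c (slicePos ε z m) else 0

/-!
Every root of the slice `T_z` is an interval `[i, j]` with `i ≤ z ≤ j`. By inclusion–exclusion,
`ASum z x - ASum z y = BSum z x y - BSum z y x`, and when `x` lies between `y` and `z` the term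
`BSum z y x` vanishes, since a root containing `y` and `z` contains everything in between.
In both cases `s ≤ p` and `p < s` this turns each side of the Lusztig-cone inequality into a
single `BSum`.
-/

open Set

lemma slicePos_fst_le (ε : ℕ → Bool) (z m : ℕ) : (slicePos ε z m).1 ≤ z := by
  induction m with
  | zero => simp [slicePos]
  | succ m ih =>
    simp only [slicePos]
    split <;> dsimp only <;> omega

lemma le_slicePos_snd (ε : ℕ → Bool) (z m : ℕ) : (z : ℤ) ≤ (slicePos ε z m).2 := by
  induction m with
  | zero => simp [slicePos]
  | succ m ih =>
    simp only [slicePos]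
    split <;> dsimp only <;> omega

lemma ASum_sub_ASum (n : ℕ) (ε : ℕ → Bool) (c : ℤ × ℤ → ℤ) (z : ℕ) (x y : ℤ) :
    ASum n ε c z x - ASum n ε c z y = BSum n ε c z x y - BSum n ε c z y x := by
  unfold ASum BSum
  rw [← Finset.sum_sub_distrib, ← Finset.sum_sub_distrib]
  refine Finset.sum_congr rfl fun m _ => ?_
  split_ifs <;> simp_all

lemma BSum_eq_zero_of_mem_uIcc (n : ℕ) (ε : ℕ → Bool) (c : ℤ × ℤ → ℤ) (z : ℕ) {x y : ℤ}
    (h : y ∈ uIcc x (z : ℤ)) : BSum n ε c z x y = 0 := by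
  refine Finset.sum_eq_zero fun m _ => if_neg ?_
  rintro ⟨-, hx₁, hx₂, hy⟩
  exact hy (uIcc_subset_Icc ⟨hx₁, hx₂⟩ ⟨slicePos_fst_le ε z m, le_slicePos_snd ε z m⟩ h)

lemma ASum_sub_ASum_of_mem_uIcc (n : ℕ) (ε : ℕ → Bool) (c : ℤ × ℤ → ℤ) (z : ℕ) {x y : ℤ}
    (h : x ∈ uIcc y (z : ℤ)) : ASum n ε c z x - ASum n ε c z y = BSum n ε c z x y := by
  rw [ASum_sub_ASum, BSum_eq_zero_of_mem_uIcc n ε c z h, sub_zero]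

-- Slices `p` and `p + 1` are the paper's `T_{n+1-p}` and `T_{n-p}`; the four `ASum`s are
-- `a_t`, `a_u`, `a_{t+1}` and `a_{u-1}`.
theorem lusztig_inequality_translation_general
    (n p s : ℕ) (ε : ℕ → Bool) (c : ℤ × ℤ → ℤ) :
    (s ≤ p →
      ((ASum n ε c p (s : ℤ) + ASum n ε c (p + 1) (s : ℤ) ≤
          ASum n ε c p ((s : ℤ) - 1) + ASum n ε c (p + 1) ((s : ℤ) + 1)) ↔
        BSum n ε c p (s : ℤ) ((s : ℤ) - 1) ≤
          BSum n ε c (p + 1) ((s : ℤ) + 1) (s : ℤ))) ∧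
    (p < s →
      ((ASum n ε c p (s : ℤ) + ASum n ε c (p + 1) (s : ℤ) ≤
          ASum n ε c p ((s : ℤ) - 1) + ASum n ε c (p + 1) ((s : ℤ) + 1)) ↔
        BSum n ε c (p + 1) (s : ℤ) ((s : ℤ) + 1) ≤
          BSum n ε c p ((s : ℤ) - 1) (s : ℤ))) := by
  refine ⟨fun hsp => ?_, fun hps => ?_⟩
  · have h₁ := ASum_sub_ASum_of_mem_uIcc n ε c p (x := s) (y := s - 1)
      (mem_uIcc.2 <| .inl ⟨by omega, by omega⟩)
    have h₂ := ASum_sub_ASum_of_mem_uIcc n ε c (p + 1) (x := s + 1) (y := s)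
      (mem_uIcc.2 <| .inl ⟨by omega, by push_cast; omega⟩)
    omega
  · have h₁ := ASum_sub_ASum_of_mem_uIcc n ε c p (x := s - 1) (y := s)
      (mem_uIcc.2 <| .inr ⟨by omega, by omega⟩)
    have h₂ := ASum_sub_ASum_of_mem_uIcc n ε c (p + 1) (x := s) (y := s + 1)
      (mem_uIcc.2 <| .inr ⟨by push_cast; omega, by omega⟩)
    omega

/-- Translation of the Lusztig-cone inequalities under `a = D(c)` (Section 9 of the
paper).  Let `e = l_p` and `e'= l_{p+1}` be two consecutive left-oriented edges of `Q`
(all edges strictly between being right-oriented; `e' = n` encodes the middle factor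
`(n ↘ 1)`), where `p` is the number of left-oriented edges `≤ e`, so that the factors
`(l_p ↘ 1)` and `(l_{p+1} ↘ 1)` of `i(Q)` correspond to the slices denoted `T_{n+1-p}`
and `T_{n-p}` in the paper (here `slicePos`-slices `p` and `p+1`).  For a letter `s`
with `1 < s ≤ l_p`, occurring at position `t` in the first factor and `u` in the second,
the Lusztig-cone inequality `a_{t+1} + a_{u-1} ≥ a_t + a_u` translates into:
if `s ≤ p`, `Σ_{α ∈ T_{n+1-p}, s ∈ α, s-1 ∉ α} c_α ≤ Σ_{α ∈ T_{n-p}, s+1 ∈ α, s ∉ α} c_α`;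
and if `s > p`, `Σ_{α ∈ T_{n+1-p}, s-1 ∈ α, s ∉ α} c_α ≥ Σ_{α ∈ T_{n-p}, s ∈ α, s+1 ∉ α} c_α`,
where `a_t = Σ_{α ∈ T_{n+1-p}, s ∈ α} c_α`, `a_{t+1} = Σ_{α ∈ T_{n+1-p}, s-1 ∈ α} c_α`,
`a_{u-1} = Σ_{α ∈ T_{n-p}, s+1 ∈ α} c_α`, `a_u = Σ_{α ∈ T_{n-p}, s ∈ α} c_α`. -/
theorem lusztig_inequality_translation
    (n e e' p s : ℕ) (ε : ℕ → Bool) (c : ℤ × ℤ → ℤ)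
    (hn : 1 ≤ n)
    (he : 1 ≤ e) (hee' : e < e') (he'n : e' ≤ n)
    (hel : ε e = false) (he'l : e' ≤ n - 1 → ε e' = false)
    (hbetween : ∀ m, e < m → m < e' → ε m = true)
    (hp : p = ((Finset.Icc 1 e).filter (fun m => ε m = false)).card)
    (hs1 : 2 ≤ s) (hse : s ≤ e) :
    (s ≤ p →
      ((ASum n ε c p (s : ℤ) + ASum n ε c (p + 1) (s : ℤ) ≤
          ASum n ε c p ((s : ℤ) - 1) + ASum n ε c (p + 1) ((s : ℤ) + 1)) ↔
        BSum n ε c p (s : ℤ) ((s : ℤ) - 1) ≤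
          BSum n ε c (p + 1) ((s : ℤ) + 1) (s : ℤ))) ∧
    (p < s →
      ((ASum n ε c p (s : ℤ) + ASum n ε c (p + 1) (s : ℤ) ≤
          ASum n ε c p ((s : ℤ) - 1) + ASum n ε c (p + 1) ((s : ℤ) + 1)) ↔
        BSum n ε c (p + 1) (s : ℤ) ((s : ℤ) + 1) ≤
          BSum n ε c p ((s : ℤ) - 1) (s : ℤ))) :=
  lusztig_inequality_translation_general n p s ε c
end

section
/- In the slice partition of the positive roots of type A_n determined by a quiver Q' (built on the linear quiver Q_k), every positive root belongs to exactly one slice T_z, and the partition R^+ = ∪_z T_z is directed: within a slice all pairwise Ext^1 groups between the corresponding indecomposables vanish, and between an earlier slice and a later slice, Ext^1 in one direction and Hom in the other both vanish. -/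
/-!
Write `L m` and `R m` for the numbers of left- and right-oriented edges among the first `m`
edges of `Q'`. The `m`-th vertex of `S_z` is the root `(z - L m, z + R m)`, so a root `(i, j)`
occurs only at `m = j - i`, and then exactly in the slice `z = i + L (j - i)`. Since `L` and `R`
are monotone, a vertex of a slice `S_z'` that lies below a vertex of `S_z` in both coordinates
forces `z' ≤ z` (and `z' < z` if both inequalities are strict); the `Hom`- and
`Ext¹`-criteria for interval modules are exactly such coordinate comparisons.
-/

attribute [local instance] Classical.propDecidable

def leftSteps (ε : ℕ → Bool) : ℕ → ℕ
  | 0 => 0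
  | m + 1 => leftSteps ε m + if ε (m + 1) then 0 else 1

def rightSteps (ε : ℕ → Bool) : ℕ → ℕ
  | 0 => 0
  | m + 1 => rightSteps ε m + if ε (m + 1) then 1 else 0

section Steps

variable (ε : ℕ → Bool)

theorem leftSteps_add_rightSteps : ∀ m, leftSteps ε m + rightSteps ε m = m
  | 0 => rfl
  | m + 1 => by
    have := leftSteps_add_rightSteps m
    simp only [leftSteps, rightSteps]
    cases ε (m + 1) <;> simp only [Bool.false_eq_true, if_true, if_false] <;> omega

theorem monotone_leftSteps : Monotone (leftSteps ε) :=
  monotone_nat_of_le_succ fun m => by simp only [leftSteps]; omega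

theorem monotone_rightSteps : Monotone (rightSteps ε) :=
  monotone_nat_of_le_succ fun m => by simp only [rightSteps]; omega

theorem slicePos_eq (z : ℕ) :
    ∀ m, slicePos ε z m = ((z : ℤ) - leftSteps ε m, (z : ℤ) + rightSteps ε m)
  | 0 => by simp [slicePos, leftSteps, rightSteps]
  | m + 1 => by
    rw [slicePos, slicePos_eq z m]
    simp only [leftSteps, rightSteps]
    cases ε (m + 1) <;>
      simp only [Bool.false_eq_true, if_true, if_false, Prod.mk.injEq] <;> push_cast <;> omega

theorem slicePos_eq_iff {z m : ℕ} {i j : ℤ} :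
    slicePos ε z m = (i, j) ↔ (m : ℤ) = j - i ∧ (z : ℤ) = i + leftSteps ε m := by
  have := leftSteps_add_rightSteps ε m
  rw [slicePos_eq, Prod.mk.injEq]
  omega

theorem le_of_slicePos_le {z z' m m' : ℕ} (h : slicePos ε z' m' ≤ slicePos ε z m) : z' ≤ z := by
  rw [slicePos_eq, slicePos_eq, Prod.mk_le_mk] at h
  rcases le_total m m' with hm | hm
  · have := monotone_rightSteps ε hm; omega
  · have := monotone_leftSteps ε hm; omega

theorem lt_of_slicePos_fst_lt_of_snd_lt {z z' m m' : ℕ}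
    (h₁ : (slicePos ε z' m').1 < (slicePos ε z m).1)
    (h₂ : (slicePos ε z' m').2 < (slicePos ε z m).2) : z' < z := by
  rw [slicePos_eq, slicePos_eq] at h₁ h₂
  rcases le_total m m' with hm | hm
  · have := monotone_rightSteps ε hm; omega
  · have := monotone_leftSteps ε hm; omega

theorem existsUnique_slice_of_root (n : ℕ) {i j : ℤ} (hi : 1 ≤ i) (hij : i ≤ j) (hjn : j ≤ n) :
    ∃! z, 1 ≤ z ∧ z ≤ n ∧ ∃ m, m < n ∧ inRange n ε z m ∧ slicePos ε z m = (i, j) := by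
  obtain ⟨m, hm⟩ : ∃ m : ℕ, (m : ℤ) = j - i := ⟨(j - i).toNat, Int.toNat_of_nonneg (by omega)⟩
  have hsteps := leftSteps_add_rightSteps ε m
  obtain ⟨z, hz⟩ : ∃ z : ℕ, (z : ℤ) = i + leftSteps ε m := ⟨(i + leftSteps ε m).toNat, by omega⟩
  have hpos : slicePos ε z m = (i, j) := (slicePos_eq_iff ε).2 ⟨hm, hz⟩
  refine ⟨z, ⟨by omega, by omega, m, by omega, by rw [inRange, hpos]; exact ⟨hi, hjn⟩, hpos⟩, ?_⟩
  rintro z' ⟨-, -, m', -, -, hpos'⟩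
  obtain ⟨hm', hz'⟩ := (slicePos_eq_iff ε).1 hpos'
  obtain rfl : m' = m := by omega
  omega

theorem not_extNe_slicePos {ExtNe : ℤ × ℤ → ℤ × ℤ → Prop}
    (hExt : ∀ a b c d : ℤ, ExtNe (a, b) (c, d) ↔ 2 ≤ a ∧ c ≤ a - 1 ∧ a - 1 ≤ d ∧ d ≤ b - 1)
    {z z' : ℕ} (hz : z ≤ z') (m m' : ℕ) : ¬ ExtNe (slicePos ε z m) (slicePos ε z' m') := by
  intro h
  obtain ⟨-, h₁, -, h₂⟩ := (hExt _ _ _ _).1 h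
  exact hz.not_gt (lt_of_slicePos_fst_lt_of_snd_lt ε (m := m) (m' := m') (by omega) (by omega))

theorem not_homNe_slicePos {HomNe : ℤ × ℤ → ℤ × ℤ → Prop}
    (hHom : ∀ a b c d : ℤ, HomNe (a, b) (c, d) ↔ a ≤ c ∧ c ≤ b ∧ b ≤ d)
    {z z' : ℕ} (hz : z < z') (m m' : ℕ) : ¬ HomNe (slicePos ε z' m') (slicePos ε z m) := by
  intro h
  obtain ⟨h₁, -, h₂⟩ := (hHom _ _ _ _).1 h
  exact hz.not_ge (le_of_slicePos_le ε ⟨h₁, h₂⟩)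

end Steps

theorem slice_partition_directed_general
    (n : ℕ) (ε : ℕ → Bool)
    (HomNe ExtNe : ℤ × ℤ → ℤ × ℤ → Prop)
    (hHom : ∀ a b c d : ℤ, HomNe (a, b) (c, d) ↔ a ≤ c ∧ c ≤ b ∧ b ≤ d)
    (hExt : ∀ a b c d : ℤ, ExtNe (a, b) (c, d) ↔
      2 ≤ a ∧ c ≤ a - 1 ∧ a - 1 ≤ d ∧ d ≤ b - 1) :
    -- every positive root belongs to exactly one slice
    (∀ i j : ℤ, 1 ≤ i → i ≤ j → j ≤ (n : ℤ) →
      ∃! z, 1 ≤ z ∧ z ≤ n ∧ ∃ m, m < n ∧ inRange n ε z m ∧ slicePos ε z m = (i, j)) ∧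
    -- (i) within one slice, all Ext¹ groups vanish
    (∀ z m m', 1 ≤ z → z ≤ n → m < n → m' < n → inRange n ε z m → inRange n ε z m' →
      ¬ ExtNe (slicePos ε z m) (slicePos ε z m')) ∧
    -- (ii) between an earlier slice and a later one, Ext¹ in one direction and Hom in
    -- the other both vanish
    (∀ z z' m m', 1 ≤ z → z < z' → z' ≤ n → m < n → m' < n →
      inRange n ε z m → inRange n ε z' m' →
      ¬ ExtNe (slicePos ε z m) (slicePos ε z' m') ∧
      ¬ HomNe (slicePos ε z' m') (slicePos ε z m)) :=
  ⟨fun _ _ hi hij hjn => existsUnique_slice_of_root ε n hi hij hjn,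
    fun _ m m' _ _ _ _ _ _ => not_extNe_slicePos ε hExt le_rfl m m',
    fun _ _ m m' _ hz _ _ _ _ _ =>
      ⟨not_extNe_slicePos ε hExt hz.le m m', not_homNe_slicePos ε hHom hz m m'⟩⟩

/-- The slice partition of the positive roots of type `A_n` determined by a quiver `Q'`
(built on the linear quiver `Q_k` with arrows `i ← i+1`) is a partition into slices
`T_1, ..., T_n`, and it is directed in the sense of Definition 4.2.

Here `HomNe α β` (resp. `ExtNe α β`) stands for `Hom(X_α, X_β) ≠ 0` (resp.
`Ext^1(X_α, X_β) ≠ 0`) for the interval indecomposables `X_{(i,j)} = M[i,j]` of the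
linear quiver `Q_k`; these relations are characterized combinatorially by the hypotheses
`hHom` and `hExt`.  The conclusions: every positive root lies in exactly one slice;
within a slice all `Ext^1`-groups vanish; and for slices `z < z'`, `Ext^1` from the
earlier to the later slice and `Hom` from the later to the earlier slice both vanish. -/
theorem slice_partition_directed
    (n : ℕ) (hn : 1 ≤ n) (ε : ℕ → Bool)
    (HomNe ExtNe : ℤ × ℤ → ℤ × ℤ → Prop)
    (hHom : ∀ a b c d : ℤ, HomNe (a, b) (c, d) ↔ a ≤ c ∧ c ≤ b ∧ b ≤ d)
    (hExt : ∀ a b c d : ℤ, ExtNe (a, b) (c, d) ↔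
      2 ≤ a ∧ c ≤ a - 1 ∧ a - 1 ≤ d ∧ d ≤ b - 1) :
    -- every positive root belongs to exactly one slice
    (∀ i j : ℤ, 1 ≤ i → i ≤ j → j ≤ (n : ℤ) →
      ∃! z, 1 ≤ z ∧ z ≤ n ∧ ∃ m, m < n ∧ inRange n ε z m ∧ slicePos ε z m = (i, j)) ∧
    -- (i) within one slice, all Ext¹ groups vanish
    (∀ z m m', 1 ≤ z → z ≤ n → m < n → m' < n → inRange n ε z m → inRange n ε z m' →
      ¬ ExtNe (slicePos ε z m) (slicePos ε z m')) ∧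
    -- (ii) between an earlier slice and a later one, Ext¹ in one direction and Hom in
    -- the other both vanish
    (∀ z z' m m', 1 ≤ z → z < z' → z' ≤ n → m < n → m' < n →
      inRange n ε z m → inRange n ε z' m' →
      ¬ ExtNe (slicePos ε z m) (slicePos ε z' m') ∧
      ¬ HomNe (slicePos ε z' m') (slicePos ε z m)) :=
  slice_partition_directed_general n ε HomNe ExtNe hHom hExt
end
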